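/- In the hard instance, every feasible round contains at most 8 jobs; that is, if S is any set of jobs of the hard instance such that for every edge the total demand of the jobs of S using that edge is at most 4000γ, then |S| ≤ 8. -/
import Mathlib


open scoped Classical

/-- A job on the path: source vertex `s`, sink vertex `t`, demand `d`. -/
structure Job where
  s : ℤ
  t : ℤ
  d : ℤ
  deriving DecidableEq

/-- The width of a job. -/
def Job.w (j : Job) : ℤ := j.t - j.s

/-- Job `j` uses the edge `e_k` (joining vertices `k-1` and `k`) iff `s_j < k ≤ t_j`. -/
def Job.uses (j : Job) (k : ℤ) : Prop := j.s < k ∧ k ≤ j.t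

/-- Indices of the jobs of the hard instance. -/
inductive Idx (q nd : ℕ) where
  | aX  (i : Fin q)
  | aX' (i : Fin q)
  | aY  (j : Fin q)
  | aY' (j : Fin q)
  | aZ  (k : Fin q)
  | aZ' (k : Fin q)
  | b   (l : Fin (2 * q))
  | b'  (l : Fin (2 * q))
  | dummy (d : Fin nd)
  deriving DecidableEq, Fintype

namespace Hard

variable (q : ℕ)

def ρ : ℤ := 32 * q
def γ : ℤ := (ρ q) ^ 4 + 15

def x' (i : Fin q) : ℤ := ((i : ℕ) + 1) * ρ q + 1
def y' (j : Fin q) : ℤ := ((j : ℕ) + 1) * (ρ q) ^ 2 + 2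
def z' (k : Fin q) : ℤ := ((k : ℕ) + 1) * (ρ q) ^ 3 + 4
def τ' (trip : Fin q × Fin q × Fin q) : ℤ :=
  (ρ q) ^ 4 - ((trip.2.2 : ℕ) + 1) * (ρ q) ^ 3 - ((trip.2.1 : ℕ) + 1) * (ρ q) ^ 2
    - ((trip.1 : ℕ) + 1) * ρ q + 8

def alphaN : ℕ := (⌊(0.9690082645 : ℚ) * q⌋).toNat
def betaN : ℕ := (⌈(0.979338843 : ℚ) * q⌉).toNat
/-- The number of dummy jobs, `5q - 4β(q)`. -/
def ndN : ℕ := 5 * q - 4 * betaN q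

/-- The jobs of the hard instance, given the triplets `τ`. -/
def jobOf (nd : ℕ) (τ : Fin (2 * q) → Fin q × Fin q × Fin q) : Idx q nd → Job
  | .aX i  => ⟨0, 20000 * γ q - 4 * x' q i, 999 * γ q + 4 * x' q i⟩
  | .aX' i => ⟨20000 * γ q - 4 * x' q i, 40000 * γ q, 1001 * γ q - 4 * x' q i⟩
  | .aY j  => ⟨0, 20000 * γ q - 4 * y' q j, 999 * γ q + 4 * y' q j⟩
  | .aY' j => ⟨20000 * γ q - 4 * y' q j, 40000 * γ q, 1001 * γ q - 4 * y' q j⟩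
  | .aZ k  => ⟨0, 20000 * γ q - 4 * z' q k, 999 * γ q + 4 * z' q k⟩
  | .aZ' k => ⟨20000 * γ q - 4 * z' q k, 40000 * γ q, 1001 * γ q - 4 * z' q k⟩
  | .b l   => ⟨0, 19001 * γ q - 4 * τ' q (τ l), 999 * γ q + 4 * τ' q (τ l)⟩
  | .b' l  => ⟨19001 * γ q - 4 * τ' q (τ l), 40000 * γ q, 1001 * γ q - 4 * τ' q (τ l)⟩
  | .dummy _ => ⟨0, 40000 * γ q, 2997 * γ q⟩

/-- The given triplet family is a 2-bounded-occurrence 3-dimensional matching instance: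
the `2q` triplets are pairwise distinct and each element of `X ∪ Y ∪ Z` occurs in
exactly two triplets. -/
def Is2B3DM (τ : Fin (2 * q) → Fin q × Fin q × Fin q) : Prop :=
  Function.Injective τ ∧
  (∀ i : Fin q, (Finset.univ.filter fun l => (τ l).1 = i).card = 2) ∧
  (∀ j : Fin q, (Finset.univ.filter fun l => (τ l).2.1 = j).card = 2) ∧
  (∀ k : Fin q, (Finset.univ.filter fun l => (τ l).2.2 = k).card = 2)

/-- A matching: no two (distinct) chosen triplets agree in any coordinate. -/
def IsMatching (τ : Fin (2 * q) → Fin q × Fin q × Fin q) (M : Finset (Fin (2 * q))) : Prop :=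
  ∀ l ∈ M, ∀ l' ∈ M, l ≠ l' →
    (τ l).1 ≠ (τ l').1 ∧ (τ l).2.1 ≠ (τ l').2.1 ∧ (τ l).2.2 ≠ (τ l').2.2

/-- A set `S` of jobs is a feasible round if on every edge of the path the
total demand of jobs of `S` using that edge is at most the capacity `4000 γ`. -/
def FeasibleRound {ι : Type*} (job : ι → Job) (S : Finset ι) : Prop :=
  ∀ k : ℤ, 1 ≤ k → k ≤ 40000 * γ q →
    (∑ idx ∈ S, if (job idx).uses k then (job idx).d else 0) ≤ 4000 * γ q


end Hard

namespace Idx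

variable {q nd : ℕ}

/-- The job is a dummy job. -/
def isDummy : Idx q nd → Prop
  | .dummy _ => True
  | _ => False

/-- The job belongs to `A = A_X ∪ A_Y ∪ A_Z`. -/
def inA : Idx q nd → Prop
  | .aX _ | .aY _ | .aZ _ => True
  | _ => False

/-- The job belongs to `A' = A'_X ∪ A'_Y ∪ A'_Z`. -/
def inA' : Idx q nd → Prop
  | .aX' _ | .aY' _ | .aZ' _ => True
  | _ => False

/-- The job belongs to `B`. -/
def inB : Idx q nd → Prop
  | .b _ => True
  | _ => False

/-- The job belongs to `B'`. -/
def inB' : Idx q nd → Prop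
  | .b' _ => True
  | _ => False

/-- The job belongs to `A ∪ B`. -/
def inAB : Idx q nd → Prop
  | .aX _ | .aY _ | .aZ _ | .b _ => True
  | _ => False

/-- The job belongs to `A' ∪ B'`. -/
def inA'B' : Idx q nd → Prop
  | .aX' _ | .aY' _ | .aZ' _ | .b' _ => True
  | _ => False

end Idx


/-- In the hard instance, every feasible round contains at most 8 jobs:
if `S` is any set of jobs of the hard instance such that for every edge the total demand
of the jobs of `S` using that edge is at most `4000 γ`, then `|S| ≤ 8`. -/
theorem hard_instance_round_card_le_eight (q : ℕ) (hq : 1 ≤ q)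
    (τ : Fin (2 * q) → Fin q × Fin q × Fin q) (hτ : Hard.Is2B3DM q τ)
    (S : Finset (Idx q (Hard.ndN q)))
    (hS : Hard.FeasibleRound q (Hard.jobOf q (Hard.ndN q) τ) S) :
    S.card ≤ 8 := by
  classical
  have hq' : (1:ℤ) ≤ (q:ℤ) := by exact_mod_cast hq
  have hρ : Hard.ρ q = 32 * (q:ℤ) := rfl
  have hρ32 : (32:ℤ) ≤ Hard.ρ q := by rw [hρ]; nlinarith
  have hγ : Hard.γ q = (32*(q:ℤ))^4 + 15 := by rw [Hard.γ, hρ]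
  have hg15 : (15:ℤ) ≤ Hard.γ q := by
    have : (0:ℤ) ≤ (32*(q:ℤ))^4 := by positivity
    rw [hγ]; linarith
  have hρ0 : (0:ℤ) ≤ Hard.ρ q := by linarith
  -- bounds on x', y', z', τ'
  have hx : ∀ i : Fin q, 1 ≤ Hard.x' q i ∧ Hard.x' q i ≤ Hard.γ q := by
    intro i
    have hi : ((i:ℕ):ℤ) + 1 ≤ (q:ℤ) := by exact_mod_cast i.2
    have hi0 : (0:ℤ) ≤ ((i:ℕ):ℤ) := Int.natCast_nonneg _
    constructor
    · show (1:ℤ) ≤ (((i:ℕ):ℤ) + 1) * Hard.ρ q + 1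
      nlinarith
    · show (((i:ℕ):ℤ) + 1) * Hard.ρ q + 1 ≤ Hard.γ q
      rw [hγ, hρ]
      have h1 : (((i:ℕ):ℤ) + 1) * (32*(q:ℤ)) ≤ (q:ℤ) * (32*(q:ℤ)) :=
        mul_le_mul_of_nonneg_right hi (by positivity)
      have h2 : (q:ℤ)^2 ≤ (q:ℤ)^4 := pow_le_pow_right₀ hq' (by norm_num)
      nlinarith [sq_nonneg ((q:ℤ))]
  have hy : ∀ j : Fin q, 1 ≤ Hard.y' q j ∧ Hard.y' q j ≤ Hard.γ q := by
    intro j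
    have hi : ((j:ℕ):ℤ) + 1 ≤ (q:ℤ) := by exact_mod_cast j.2
    have hi0 : (0:ℤ) ≤ ((j:ℕ):ℤ) := Int.natCast_nonneg _
    constructor
    · show (1:ℤ) ≤ (((j:ℕ):ℤ) + 1) * (Hard.ρ q)^2 + 2
      nlinarith [mul_nonneg (by linarith : (0:ℤ) ≤ ((j:ℕ):ℤ) + 1) (pow_nonneg hρ0 2)]
    · show (((j:ℕ):ℤ) + 1) * (Hard.ρ q)^2 + 2 ≤ Hard.γ q
      rw [hγ, hρ]
      have h1 : (((j:ℕ):ℤ) + 1) * (32*(q:ℤ))^2 ≤ (q:ℤ) * (32*(q:ℤ))^2 :=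
        mul_le_mul_of_nonneg_right hi (by positivity)
      have h2 : (q:ℤ)^3 ≤ (q:ℤ)^4 := pow_le_pow_right₀ hq' (by norm_num)
      nlinarith [pow_nonneg (by positivity : (0:ℤ) ≤ (q:ℤ)) 3]
  have hz : ∀ k : Fin q, 1 ≤ Hard.z' q k ∧ Hard.z' q k ≤ Hard.γ q := by
    intro k
    have hi : ((k:ℕ):ℤ) + 1 ≤ (q:ℤ) := by exact_mod_cast k.2
    have hi0 : (0:ℤ) ≤ ((k:ℕ):ℤ) := Int.natCast_nonneg _
    constructor
    · show (1:ℤ) ≤ (((k:ℕ):ℤ) + 1) * (Hard.ρ q)^3 + 4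
      nlinarith [mul_nonneg (by linarith : (0:ℤ) ≤ ((k:ℕ):ℤ) + 1) (pow_nonneg hρ0 3)]
    · show (((k:ℕ):ℤ) + 1) * (Hard.ρ q)^3 + 4 ≤ Hard.γ q
      rw [hγ, hρ]
      have h1 : (((k:ℕ):ℤ) + 1) * (32*(q:ℤ))^3 ≤ (q:ℤ) * (32*(q:ℤ))^3 :=
        mul_le_mul_of_nonneg_right hi (by positivity)
      nlinarith [pow_nonneg (by positivity : (0:ℤ) ≤ (q:ℤ)) 4]
  have hτ' : ∀ t : Fin q × Fin q × Fin q, 0 ≤ Hard.τ' q t ∧ Hard.τ' q t ≤ Hard.γ q := by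
    intro t
    obtain ⟨i, j, k⟩ := t
    have hi : ((i:ℕ):ℤ) + 1 ≤ (q:ℤ) := by exact_mod_cast i.2
    have hj : ((j:ℕ):ℤ) + 1 ≤ (q:ℤ) := by exact_mod_cast j.2
    have hk : ((k:ℕ):ℤ) + 1 ≤ (q:ℤ) := by exact_mod_cast k.2
    have hi0 : (1:ℤ) ≤ ((i:ℕ):ℤ) + 1 := by omega
    have hj0 : (1:ℤ) ≤ ((j:ℕ):ℤ) + 1 := by omega
    have hk0 : (1:ℤ) ≤ ((k:ℕ):ℤ) + 1 := by omega
    have hτdef : Hard.τ' q (i, j, k) =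
        (Hard.ρ q)^4 - (((k:ℕ):ℤ)+1) * (Hard.ρ q)^3 - (((j:ℕ):ℤ)+1) * (Hard.ρ q)^2
          - (((i:ℕ):ℤ)+1) * Hard.ρ q + 8 := rfl
    rw [hτdef, hρ]
    constructor
    · have h2 : (q:ℤ)^2 ≤ (q:ℤ)^4 := pow_le_pow_right₀ hq' (by norm_num)
      have h3 : (q:ℤ)^3 ≤ (q:ℤ)^4 := pow_le_pow_right₀ hq' (by norm_num)
      nlinarith [mul_le_mul_of_nonneg_right hk (by positivity : (0:ℤ) ≤ (32*(q:ℤ))^3),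
        mul_le_mul_of_nonneg_right hj (by positivity : (0:ℤ) ≤ (32*(q:ℤ))^2),
        mul_le_mul_of_nonneg_right hi (by positivity : (0:ℤ) ≤ 32*(q:ℤ)),
        pow_nonneg (by positivity : (0:ℤ) ≤ (q:ℤ)) 4]
    · rw [hγ]
      nlinarith [mul_le_mul_of_nonneg_right hk0 (by positivity : (0:ℤ) ≤ (32*(q:ℤ))^3),
        mul_le_mul_of_nonneg_right hj0 (by positivity : (0:ℤ) ≤ (32*(q:ℤ))^2),
        mul_le_mul_of_nonneg_right hi0 (by positivity : (0:ℤ) ≤ 32*(q:ℤ)),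
        pow_nonneg (by positivity : (0:ℤ) ≤ (q:ℤ)) 2,
        pow_nonneg (by positivity : (0:ℤ) ≤ (q:ℤ)) 3]
  set J := Hard.jobOf q (Hard.ndN q) τ with hJ
  -- key property of every job
  have key : ∀ idx : Idx q (Hard.ndN q),
      997 * Hard.γ q ≤ (J idx).d ∧ ((J idx).uses 1 ∨ (J idx).uses (40000 * Hard.γ q)) := by
    intro idx
    cases idx with
    | aX i =>
        obtain ⟨h1, h2⟩ := hx i
        exact ⟨by show 997*Hard.γ q ≤ 999*Hard.γ q + 4*Hard.x' q i; linarith,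
          Or.inl ⟨show (0:ℤ) < 1 by norm_num, by show (1:ℤ) ≤ 20000*Hard.γ q - 4*Hard.x' q i; linarith⟩⟩
    | aX' i =>
        obtain ⟨h1, h2⟩ := hx i
        exact ⟨by show 997*Hard.γ q ≤ 1001*Hard.γ q - 4*Hard.x' q i; linarith,
          Or.inr ⟨by show 20000*Hard.γ q - 4*Hard.x' q i < 40000*Hard.γ q; linarith, le_refl _⟩⟩
    | aY j =>
        obtain ⟨h1, h2⟩ := hy j
        exact ⟨by show 997*Hard.γ q ≤ 999*Hard.γ q + 4*Hard.y' q j; linarith,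
          Or.inl ⟨show (0:ℤ) < 1 by norm_num, by show (1:ℤ) ≤ 20000*Hard.γ q - 4*Hard.y' q j; linarith⟩⟩
    | aY' j =>
        obtain ⟨h1, h2⟩ := hy j
        exact ⟨by show 997*Hard.γ q ≤ 1001*Hard.γ q - 4*Hard.y' q j; linarith,
          Or.inr ⟨by show 20000*Hard.γ q - 4*Hard.y' q j < 40000*Hard.γ q; linarith, le_refl _⟩⟩
    | aZ k =>
        obtain ⟨h1, h2⟩ := hz k
        exact ⟨by show 997*Hard.γ q ≤ 999*Hard.γ q + 4*Hard.z' q k; linarith,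
          Or.inl ⟨show (0:ℤ) < 1 by norm_num, by show (1:ℤ) ≤ 20000*Hard.γ q - 4*Hard.z' q k; linarith⟩⟩
    | aZ' k =>
        obtain ⟨h1, h2⟩ := hz k
        exact ⟨by show 997*Hard.γ q ≤ 1001*Hard.γ q - 4*Hard.z' q k; linarith,
          Or.inr ⟨by show 20000*Hard.γ q - 4*Hard.z' q k < 40000*Hard.γ q; linarith, le_refl _⟩⟩
    | b l =>
        obtain ⟨h1, h2⟩ := hτ' (τ l)
        exact ⟨by show 997*Hard.γ q ≤ 999*Hard.γ q + 4*Hard.τ' q (τ l); linarith,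
          Or.inl ⟨show (0:ℤ) < 1 by norm_num, by show (1:ℤ) ≤ 19001*Hard.γ q - 4*Hard.τ' q (τ l); linarith⟩⟩
    | b' l =>
        obtain ⟨h1, h2⟩ := hτ' (τ l)
        exact ⟨by show 997*Hard.γ q ≤ 1001*Hard.γ q - 4*Hard.τ' q (τ l); linarith,
          Or.inr ⟨by show 19001*Hard.γ q - 4*Hard.τ' q (τ l) < 40000*Hard.γ q; linarith, le_refl _⟩⟩
    | dummy d =>
        exact ⟨by show 997*Hard.γ q ≤ 2997*Hard.γ q; linarith,
          Or.inl ⟨show (0:ℤ) < 1 by norm_num, by show (1:ℤ) ≤ 40000*Hard.γ q; linarith⟩⟩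
  -- at most 4 jobs on any edge
  have hcard : ∀ k : ℤ, 1 ≤ k → k ≤ 40000 * Hard.γ q →
      (S.filter (fun idx => (J idx).uses k)).card ≤ 4 := by
    intro k hk1 hk2
    have hsum := hS k hk1 hk2
    rw [show (∑ idx ∈ S, if (J idx).uses k then (J idx).d else 0)
        = ∑ idx ∈ S.filter (fun idx => (J idx).uses k), (J idx).d from
      (Finset.sum_filter _ _).symm] at hsum
    by_contra hcon
    push_neg at hcon
    have h5 : 5 ≤ (S.filter (fun idx => (J idx).uses k)).card := hcon
    have hlb : (S.filter (fun idx => (J idx).uses k)).card • (997 * Hard.γ q)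
        ≤ ∑ idx ∈ S.filter (fun idx => (J idx).uses k), (J idx).d :=
      Finset.card_nsmul_le_sum _ _ _ (fun x _ => (key x).1)
    have h5' : (5:ℕ) • (997 * Hard.γ q) ≤ (S.filter (fun idx => (J idx).uses k)).card • (997 * Hard.γ q) :=
      nsmul_le_nsmul_left (by linarith) h5
    simp only [nsmul_eq_mul] at h5' hlb
    push_cast at h5' hlb
    linarith
  -- split S into the two edge classes
  have hsub : S ⊆ S.filter (fun idx => (J idx).uses 1)
      ∪ S.filter (fun idx => (J idx).uses (40000 * Hard.γ q)) := by
    intro x hxS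
    rcases (key x).2 with h | h
    · exact Finset.mem_union_left _ (Finset.mem_filter.2 ⟨hxS, h⟩)
    · exact Finset.mem_union_right _ (Finset.mem_filter.2 ⟨hxS, h⟩)
  calc S.card ≤ (S.filter (fun idx => (J idx).uses 1)
      ∪ S.filter (fun idx => (J idx).uses (40000 * Hard.γ q))).card := Finset.card_le_card hsub
    _ ≤ (S.filter (fun idx => (J idx).uses 1)).card
        + (S.filter (fun idx => (J idx).uses (40000 * Hard.γ q))).card := Finset.card_union_le _ _
    _ ≤ 4 + 4 := by
        have h1 := hcard 1 le_rfl (by linarith)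
        have h2 := hcard (40000 * Hard.γ q) (by linarith) le_rfl
        omega
    _ = 8 := rfl
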